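/- Let {φₙ} be a sequence of univalent functions on ℂ \ 𝔻̄ with φₙ(z) → ∞ as z → ∞, converging uniformly on compact subsets of ℂ \ 𝔻̄ to a nonconstant function φ. For θ ∈ [0,1), define the length ℓ_φ(θ) = ∫₁² |φ'(r e^{2πiθ})| dr. If ℓ_φ(θ) < ∞ and ℓ_{φₙ}(θ) → ℓ_φ(θ), then φₙ converges to φ uniformly on the closed radial segment [1,2]·e^{2πiθ}, where all functions are extended to the endpoint e^{2πiθ} by their radial limits (which exist). -/

import Mathlib

open scoped ENNReal
open MeasureTheory Filter Set

section Aux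

variable {e : ℂ} (he1 : ‖e‖ = 1)

/-- the set Ω -/
private def Om : Set ℂ := {z : ℂ | 1 < ‖z‖}

lemma Om_open : IsOpen Om := by
  have : Om = (fun z : ℂ => ‖z‖) ⁻¹' (Set.Ioi 1) := rfl
  rw [this]
  exact isOpen_Ioi.preimage continuous_norm

include he1 in
lemma mem_Om {t : ℝ} (ht : 1 < t) : (t : ℂ) * e ∈ Om := by
  simp only [Om, Set.mem_setOf_eq, norm_mul, he1, mul_one, Complex.norm_real, Real.norm_eq_abs]
  rw [abs_of_pos (by linarith)]
  exact ht

/-- the measurable density -/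
private noncomputable def dens (ψ : ℂ → ℂ) (e : ℂ) : ℝ → ℝ≥0∞ :=
  fun t => ENNReal.ofReal (‖deriv ψ ((t : ℂ) * e)‖)

lemma dens_measurable (ψ : ℂ → ℂ) (e : ℂ) : Measurable (dens ψ e) := by
  apply ENNReal.measurable_ofReal.comp
  apply continuous_norm.measurable.comp
  exact (measurable_deriv ψ).comp (by fun_prop)

include he1 in
/-- FTC bound -/
lemma ftc_bound {ψ : ℂ → ℂ} (hψ : DifferentiableOn ℂ ψ Om) {s r : ℝ}
    (hs : 1 < s) (hsr : s ≤ r) :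
    ENNReal.ofReal (‖ψ ((r : ℂ) * e) - ψ ((s : ℂ) * e)‖) ≤
      ∫⁻ t in Set.Ioc s r, dens ψ e t := by
  have hderiv : ∀ t ∈ Set.Icc s r, HasDerivAt (fun u : ℝ => ψ ((u : ℂ) * e))
      (e * deriv ψ ((t : ℂ) * e)) t := by
    intro t ht
    have htΩ : (t : ℂ) * e ∈ Om := mem_Om he1 (lt_of_lt_of_le hs ht.1)
    have hψt : DifferentiableAt ℂ ψ ((t : ℂ) * e) :=
      (hψ.differentiableAt (Om_open.mem_nhds htΩ))
    have hg : HasDerivAt (fun u : ℝ => (u : ℂ) * e) e t := by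
      simpa using (Complex.ofRealCLM.hasDerivAt (x := t)).mul_const e
    have := HasDerivAt.scomp (x := t) (h := fun u : ℝ => (u : ℂ) * e)
      hψt.hasDerivAt hg
    simpa [Function.comp_def, smul_eq_mul] using this
  have hderivcont : ContinuousOn (deriv ψ) Om :=
    ((hψ.analyticOnNhd Om_open).deriv.continuousOn)
  have hcont : ContinuousOn (fun t : ℝ => e * deriv ψ ((t : ℂ) * e)) (Set.Icc s r) := by
    apply continuousOn_const.mul
    apply hderivcont.comp (by fun_prop)
    intro t ht
    exact mem_Om he1 (lt_of_lt_of_le hs ht.1)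
  have hint : IntervalIntegrable (fun t : ℝ => e * deriv ψ ((t : ℂ) * e)) volume s r := by
    apply ContinuousOn.intervalIntegrable
    rwa [Set.uIcc_of_le hsr]
  have heq : ∫ t in s..r, e * deriv ψ ((t : ℂ) * e) =
      ψ ((r : ℂ) * e) - ψ ((s : ℂ) * e) := by
    apply intervalIntegral.integral_eq_sub_of_hasDerivAt _ hint
    intro t ht
    rw [Set.uIcc_of_le hsr] at ht
    exact hderiv t ht
  have hnorm : ‖ψ ((r : ℂ) * e) - ψ ((s : ℂ) * e)‖ ≤
      ∫ t in Set.Ioc s r, ‖deriv ψ ((t : ℂ) * e)‖ := by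
    rw [← heq]
    calc ‖∫ t in s..r, e * deriv ψ ((t : ℂ) * e)‖
        ≤ ∫ t in s..r, ‖e * deriv ψ ((t : ℂ) * e)‖ := by
          exact intervalIntegral.norm_integral_le_integral_norm hsr
      _ = ∫ t in Set.Ioc s r, ‖deriv ψ ((t : ℂ) * e)‖ := by
          rw [intervalIntegral.integral_of_le hsr]
          congr 1
          ext t
          simp [he1]
  have hinteg : IntegrableOn (fun t : ℝ => ‖deriv ψ ((t : ℂ) * e)‖)
      (Set.Ioc s r) volume := by
    apply (ContinuousOn.integrableOn_compact isCompact_Icc _).mono_set Set.Ioc_subset_Icc_self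
    apply continuous_norm.comp_continuousOn
    apply hderivcont.comp (by fun_prop)
    intro t ht
    exact mem_Om he1 (lt_of_lt_of_le hs ht.1)
  calc ENNReal.ofReal (‖ψ ((r : ℂ) * e) - ψ ((s : ℂ) * e)‖)
      ≤ ENNReal.ofReal (∫ t in Set.Ioc s r, ‖deriv ψ ((t : ℂ) * e)‖) :=
        ENNReal.ofReal_le_ofReal hnorm
    _ = ∫⁻ t in Set.Ioc s r, dens ψ e t := by
        rw [MeasureTheory.ofReal_integral_eq_lintegral_ofReal hinteg]
        · rfl
        · exact Filter.Eventually.of_forall fun t => norm_nonneg _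

end Aux

section Aux2

variable {e : ℂ} (he1 : ‖e‖ = 1)

lemma abs_cont {ψ : ℂ → ℂ}
    (hfin : ∫⁻ t in Set.Ioc (1 : ℝ) 2, dens ψ e t < ⊤) {ε : ℝ≥0∞} (hε : 0 < ε) :
    ∃ a : ℝ, 1 < a ∧ a ≤ 2 ∧ ∫⁻ t in Set.Ioc (1 : ℝ) a, dens ψ e t < ε := by
  set ν : MeasureTheory.Measure ℝ := MeasureTheory.volume.withDensity (dens ψ e) with hν
  have hap : ∀ s : Set ℝ, MeasurableSet s → ν s = ∫⁻ t in s, dens ψ e t :=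
    fun s hs => MeasureTheory.withDensity_apply _ hs
  set A : ℕ → Set ℝ := fun k => Set.Ioc (1 : ℝ) (1 + 1 / (k + 1)) with hA
  have hanti : Antitone A := by
    intro i j hij
    apply Set.Ioc_subset_Ioc le_rfl
    gcongr
  have hiInter : ⋂ k, A k = ∅ := by
    ext t
    simp only [Set.mem_iInter, Set.mem_empty_iff_false, iff_false, not_forall, hA]
    by_cases ht : 1 < t
    · obtain ⟨k, hk⟩ := exists_nat_one_div_lt (show (0:ℝ) < t - 1 by linarith)
      exact ⟨k, fun h => absurd h.2 (by push_cast at hk ⊢; linarith)⟩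
    · exact ⟨0, fun h => ht h.1⟩
  have hfin0 : ν (A 0) ≠ ⊤ := by
    rw [hap _ measurableSet_Ioc]
    refine ne_of_lt (lt_of_le_of_lt (MeasureTheory.lintegral_mono_set ?_) hfin)
    apply Set.Ioc_subset_Ioc le_rfl
    norm_num
  have htend : Filter.Tendsto (ν ∘ A) Filter.atTop (nhds (ν (⋂ k, A k))) :=
    MeasureTheory.tendsto_measure_iInter_atTop
      (fun k => (measurableSet_Ioc).nullMeasurableSet) hanti ⟨0, hfin0⟩
  rw [hiInter, MeasureTheory.measure_empty] at htend
  have := (htend.eventually_lt_const hε).exists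
  obtain ⟨k, hk⟩ := this
  refine ⟨1 + 1 / (k + 1), lt_add_of_pos_right 1 (by positivity), ?_, ?_⟩
  · have : (1 : ℝ) / (k + 1) ≤ 1 := by
      rw [div_le_one (by positivity)]; linarith [Nat.cast_nonneg (α := ℝ) k]
    linarith
  · rw [← hap _ measurableSet_Ioc]
    exact hk

include he1 in
lemma radial_limit_exists {ψ : ℂ → ℂ} (hψ : DifferentiableOn ℂ ψ Om)
    (hfin : ∫⁻ t in Set.Ioc (1 : ℝ) 2, dens ψ e t < ⊤) :
    ∃ L : ℂ, Filter.Tendsto (fun r : ℝ => ψ ((r : ℂ) * e))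
      (nhdsWithin 1 (Set.Ioi 1)) (nhds L) := by
  set f : ℝ → ℂ := fun r => ψ ((r : ℂ) * e) with hf
  set l : Filter ℝ := nhdsWithin 1 (Set.Ioi 1) with hl
  have hC : Cauchy (Filter.map f l) := by
    rw [Metric.cauchy_iff]
    constructor
    · exact Filter.map_neBot
    · intro ε hε
      obtain ⟨a, ha1, ha2, haint⟩ := abs_cont (e := e) hfin
        (ENNReal.ofReal_pos.mpr hε)
      refine ⟨f '' Set.Ioo 1 a, ?_, ?_⟩
      · apply Filter.image_mem_map
        exact Ioo_mem_nhdsGT_of_mem ⟨le_rfl, ha1⟩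
      · rintro x ⟨r, hr, rfl⟩ y ⟨s, hs, rfl⟩
        have key : ∀ u v : ℝ, u ∈ Set.Ioo (1:ℝ) a → v ∈ Set.Ioo (1:ℝ) a → u ≤ v →
            dist (f v) (f u) < ε := by
          intro u v hu hv huv
          rw [Complex.dist_eq]
          have h1 := ftc_bound he1 hψ hu.1 huv
          have h2 : (∫⁻ t in Set.Ioc u v, dens ψ e t) ≤ ∫⁻ t in Set.Ioc 1 a, dens ψ e t :=
            MeasureTheory.lintegral_mono_set (Set.Ioc_subset_Ioc (le_of_lt hu.1) (le_of_lt hv.2))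
          have h3 : ENNReal.ofReal (‖f v - f u‖) < ENNReal.ofReal ε :=
            lt_of_le_of_lt (le_trans h1 h2) haint
          by_contra hcon
          push_neg at hcon
          exact absurd (ENNReal.ofReal_le_ofReal hcon) (not_le.mpr h3)
        rcases le_total r s with h | h
        · have := key r s hr hs h
          rwa [dist_comm] at this
        · exact key s r hs hr h
  obtain ⟨L, hL⟩ := CompleteSpace.complete hC
  exact ⟨L, hL⟩

end Aux2

set_option maxHeartbeats 1000000 in
/-- Let `φₙ` be univalent functions on `ℂ \ 𝔻̄` with `φₙ(z) → ∞` as `z → ∞`,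
converging uniformly on compact subsets to a nonconstant `φ`.  If the length
`ℓ_φ(θ) = ∫₁² |φ'(r e^{2πiθ})| dr` is finite and `ℓ_{φₙ}(θ) → ℓ_φ(θ)`, then `φₙ → φ`
uniformly on the closed radial segment `[1,2]e^{2πiθ}`, where the functions are
extended to the endpoint `e^{2πiθ}` by their radial limits (which exist). -/
theorem converge_uniformly_on_radial_segment
    (φ : ℂ → ℂ) (φn : ℕ → ℂ → ℂ)
    (Ω : Set ℂ) (hΩ : Ω = {z : ℂ | 1 < ‖z‖})
    (huniv : ∀ n, Set.InjOn (φn n) Ω ∧ DifferentiableOn ℂ (φn n) Ω)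
    (hinfty : ∀ n, Filter.Tendsto (φn n) (Bornology.cobounded ℂ) (Bornology.cobounded ℂ))
    (hconv : ∀ K ⊆ Ω, IsCompact K → TendstoUniformlyOn (fun n => φn n) φ Filter.atTop K)
    (hnc : ¬ ∃ c : ℂ, Set.EqOn φ (Function.const ℂ c) Ω)
    (θ : ℝ) (e : ℂ) (he : e = Complex.exp (2 * Real.pi * θ * Complex.I))
    (ℓ : (ℂ → ℂ) → ℝ≥0∞)
    (hℓ : ℓ = fun ψ => ∫⁻ r in Set.Ioc (1 : ℝ) 2,
      ENNReal.ofReal (‖deriv ψ (r * e)‖))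
    (hfin : ℓ φ < ⊤)
    (hlconv : Filter.Tendsto (fun n => ℓ (φn n)) Filter.atTop (nhds (ℓ φ))) :
    ∃ L : ℂ, Filter.Tendsto (fun r : ℝ => φ (r * e)) (nhdsWithin 1 (Set.Ioi 1)) (nhds L) ∧
      ∀ ε > 0, ∃ N : ℕ, ∀ n ≥ N,
        ∃ Ln : ℂ,
          Filter.Tendsto (fun r : ℝ => φn n (r * e)) (nhdsWithin 1 (Set.Ioi 1)) (nhds Ln) ∧
          ‖Ln - L‖ ≤ ε ∧
          ∀ r ∈ Set.Ioc (1 : ℝ) 2, ‖φn n (r * e) - φ (r * e)‖ ≤ ε := by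
  have he1 : ‖e‖ = 1 := by
    rw [he, Complex.norm_exp]
    have : (2 * (Real.pi : ℂ) * (θ : ℂ) * Complex.I).re = 0 := by
      simp [Complex.mul_I_re]
    rw [this, Real.exp_zero]
  have hΩm : Ω = Om := hΩ
  subst hΩm
  have hℓ' : ∀ ψ : ℂ → ℂ, ℓ ψ = ∫⁻ t in Set.Ioc (1 : ℝ) 2, dens ψ e t := by
    intro ψ; rw [hℓ]; rfl
  have htlu : TendstoLocallyUniformlyOn (fun n => φn n) φ Filter.atTop Om :=
    (tendstoLocallyUniformlyOn_iff_forall_isCompact Om_open).2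
      (fun K hK hKc => hconv K hK hKc)
  have hφndiff : ∀ᶠ n in Filter.atTop, DifferentiableOn ℂ (φn n) Om :=
    Filter.Eventually.of_forall fun n => (huniv n).2
  have hφdiff : DifferentiableOn ℂ φ Om := htlu.differentiableOn hφndiff Om_open
  have hderivconv := htlu.deriv hφndiff Om_open
  have hfinφ : ∫⁻ t in Set.Ioc (1 : ℝ) 2, dens φ e t < ⊤ := by rw [← hℓ']; exact hfin
  obtain ⟨L, hL⟩ := radial_limit_exists he1 hφdiff hfinφ
  refine ⟨L, hL, ?_⟩
  intro ε hε
  -- choose a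
  obtain ⟨a, ha1, ha2, haB⟩ := abs_cont (e := e) hfinφ
    (ENNReal.ofReal_pos.mpr (by linarith : (0:ℝ) < ε / 4))
  -- the compact set
  set S : Set ℂ := (fun t : ℝ => (t : ℂ) * e) '' Set.Icc a 2 with hS
  have hScompact : IsCompact S := isCompact_Icc.image (by fun_prop)
  have hSOm : S ⊆ Om := by
    rintro z ⟨t, ht, rfl⟩
    exact mem_Om he1 (lt_of_lt_of_le ha1 ht.1)
  have hduc : TendstoUniformlyOn (fun n => deriv (φn n)) (deriv φ) Filter.atTop S :=
    (tendstoLocallyUniformlyOn_iff_forall_isCompact Om_open).1 hderivconv S hSOm hScompact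
  have E1 : ∀ᶠ n in Filter.atTop, ∀ z ∈ S, dist (φ z) (φn n z) < ε / 4 :=
    (Metric.tendstoUniformlyOn_iff.1 (hconv S hSOm hScompact)) (ε / 4) (by linarith)
  have E2 : ∀ᶠ n in Filter.atTop, ∀ z ∈ S, dist (deriv φ z) (deriv (φn n) z) < ε / 8 :=
    (Metric.tendstoUniformlyOn_iff.1 hduc) (ε / 8) (by linarith)
  have E3 : ∀ᶠ n in Filter.atTop, ℓ (φn n) < ℓ φ + ENNReal.ofReal (ε / 8) :=
    hlconv.eventually_lt_const
      (ENNReal.lt_add_right (ne_of_lt hfin)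
        (ne_of_gt (ENNReal.ofReal_pos.mpr (by linarith : (0:ℝ) < ε / 8))))
  obtain ⟨N, hN⟩ := Filter.eventually_atTop.1 (E1.and (E2.and E3))
  refine ⟨N, fun n hn => ?_⟩
  obtain ⟨h1, h2, h3⟩ := hN n hn
  -- notation
  set B := ∫⁻ t in Set.Ioc (1 : ℝ) a, dens φ e t with hB
  set C := ∫⁻ t in Set.Ioc a 2, dens φ e t with hC
  set Bn := ∫⁻ t in Set.Ioc (1 : ℝ) a, dens (φn n) e t with hBn
  set Cn := ∫⁻ t in Set.Ioc a 2, dens (φn n) e t with hCn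
  have hsplitφ : ℓ φ = B + C := by
    rw [hℓ' φ, ← Set.Ioc_union_Ioc_eq_Ioc (le_of_lt ha1) ha2,
      MeasureTheory.lintegral_union measurableSet_Ioc (Set.Ioc_disjoint_Ioc_of_le le_rfl)]
  have hsplitn : ℓ (φn n) = Bn + Cn := by
    rw [hℓ' (φn n), ← Set.Ioc_union_Ioc_eq_Ioc (le_of_lt ha1) ha2,
      MeasureTheory.lintegral_union measurableSet_Ioc (Set.Ioc_disjoint_Ioc_of_le le_rfl)]
  have hℓn_fin : ℓ (φn n) < ⊤ :=
    lt_trans h3 (by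
      rw [ENNReal.add_lt_top]
      exact ⟨hfin, ENNReal.ofReal_lt_top⟩)
  have hCn_ne_top : Cn ≠ ⊤ := by
    refine ne_of_lt (lt_of_le_of_lt ?_ hℓn_fin)
    rw [hsplitn]; exact le_add_self
  -- C ≤ Cn + ε/8
  have hCCn : C ≤ Cn + ENNReal.ofReal (ε / 8) := by
    have hpt : ∀ t ∈ Set.Ioc a 2, dens φ e t ≤ dens (φn n) e t + ENNReal.ofReal (ε / 8) := by
      intro t ht
      have hz : (t : ℂ) * e ∈ S := ⟨t, ⟨le_of_lt ht.1, ht.2⟩, rfl⟩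
      have := h2 _ hz
      rw [Complex.dist_eq] at this
      have habs : ‖deriv φ ((t : ℂ) * e)‖ ≤
          ‖deriv (φn n) ((t : ℂ) * e)‖ + ε / 8 := by
        have hns := norm_sub_norm_le (deriv φ ((t : ℂ) * e)) (deriv (φn n) ((t : ℂ) * e))
        linarith
      calc dens φ e t = ENNReal.ofReal (‖deriv φ ((t : ℂ) * e)‖) := rfl
        _ ≤ ENNReal.ofReal (‖deriv (φn n) ((t : ℂ) * e)‖ + ε / 8) :=
            ENNReal.ofReal_le_ofReal habs
        _ = dens (φn n) e t + ENNReal.ofReal (ε / 8) := by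
            rw [ENNReal.ofReal_add (norm_nonneg _) (by linarith)]
            rfl
    calc C ≤ ∫⁻ t in Set.Ioc a 2, (dens (φn n) e t + ENNReal.ofReal (ε / 8)) :=
          MeasureTheory.setLIntegral_mono
            ((dens_measurable (φn n) e).add measurable_const) hpt
      _ = Cn + ENNReal.ofReal (ε / 8) * MeasureTheory.volume (Set.Ioc a 2) := by
          rw [MeasureTheory.lintegral_add_right _ measurable_const,
            MeasureTheory.setLIntegral_const]
      _ ≤ Cn + ENNReal.ofReal (ε / 8) * 1 := by
          gcongr
          calc MeasureTheory.volume (Set.Ioc a 2) = ENNReal.ofReal (2 - a) := Real.volume_Ioc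
            _ ≤ ENNReal.ofReal 1 := ENNReal.ofReal_le_ofReal (by linarith)
            _ = 1 := ENNReal.ofReal_one
      _ = Cn + ENNReal.ofReal (ε / 8) := by rw [mul_one]
  -- Bn ≤ ε/2
  have hBnbound : Bn ≤ ENNReal.ofReal (ε / 2) := by
    have key : Bn + Cn ≤ ENNReal.ofReal (ε / 2) + Cn := by
      calc Bn + Cn = ℓ (φn n) := hsplitn.symm
        _ ≤ ℓ φ + ENNReal.ofReal (ε / 8) := le_of_lt h3
        _ = B + C + ENNReal.ofReal (ε / 8) := by rw [hsplitφ]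
        _ ≤ ENNReal.ofReal (ε / 4) + (Cn + ENNReal.ofReal (ε / 8)) +
            ENNReal.ofReal (ε / 8) := by gcongr
        _ = ENNReal.ofReal (ε / 4) + ENNReal.ofReal (ε / 8) + ENNReal.ofReal (ε / 8) + Cn := by
            ring
        _ = ENNReal.ofReal (ε / 2) + Cn := by
            rw [← ENNReal.ofReal_add (by linarith) (by linarith),
              ← ENNReal.ofReal_add (by linarith) (by linarith),
              show ε / 4 + ε / 8 + ε / 8 = ε / 2 by ring]
    exact (ENNReal.add_le_add_iff_right hCn_ne_top).1 key
  -- pointwise bound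
  have hpoint : ∀ r ∈ Set.Ioc (1 : ℝ) 2, ‖φn n ((r : ℂ) * e) - φ ((r : ℂ) * e)‖ ≤ ε := by
    intro r hr
    by_cases hra : r ≤ a
    · -- triangle inequality through a
      have hterm1 : ‖φn n ((r : ℂ) * e) - φn n ((a : ℂ) * e)‖ ≤ ε / 2 := by
        have hb := ftc_bound he1 (huniv n).2 hr.1 hra
        have hmono : (∫⁻ t in Set.Ioc r a, dens (φn n) e t) ≤ Bn :=
          MeasureTheory.lintegral_mono_set (Set.Ioc_subset_Ioc (le_of_lt hr.1) le_rfl)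
        have := le_trans (le_trans hb hmono) hBnbound
        rwa [← norm_neg, neg_sub, ENNReal.ofReal_le_ofReal_iff (by linarith)] at this
      have hterm3 : ‖φ ((a : ℂ) * e) - φ ((r : ℂ) * e)‖ ≤ ε / 4 := by
        have hb := ftc_bound he1 hφdiff hr.1 hra
        have hmono : (∫⁻ t in Set.Ioc r a, dens φ e t) ≤ B :=
          MeasureTheory.lintegral_mono_set (Set.Ioc_subset_Ioc (le_of_lt hr.1) le_rfl)
        have := le_trans (le_trans hb hmono) (le_of_lt haB)
        rwa [ENNReal.ofReal_le_ofReal_iff (by linarith)] at this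
      have hterm2 : ‖φn n ((a : ℂ) * e) - φ ((a : ℂ) * e)‖ ≤ ε / 4 := by
        have hz : (a : ℂ) * e ∈ S := ⟨a, ⟨le_rfl, ha2⟩, rfl⟩
        have := h1 _ hz
        rw [Complex.dist_eq, ← norm_neg, neg_sub] at this
        exact le_of_lt this
      calc ‖φn n ((r : ℂ) * e) - φ ((r : ℂ) * e)‖
          ≤ ‖φn n ((r : ℂ) * e) - φn n ((a : ℂ) * e)‖ +
            ‖φn n ((a : ℂ) * e) - φ ((a : ℂ) * e)‖ +
            ‖φ ((a : ℂ) * e) - φ ((r : ℂ) * e)‖ := by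
            have h4 := dist_triangle4 (φn n ((r : ℂ) * e)) (φn n ((a : ℂ) * e))
              (φ ((a : ℂ) * e)) (φ ((r : ℂ) * e))
            simpa only [Complex.dist_eq] using h4
        _ ≤ ε / 2 + ε / 4 + ε / 4 := by gcongr
        _ = ε := by ring
    · push_neg at hra
      have hz : (r : ℂ) * e ∈ S := ⟨r, ⟨le_of_lt hra, hr.2⟩, rfl⟩
      have := h1 _ hz
      rw [Complex.dist_eq, ← norm_neg, neg_sub] at this
      linarith
  -- existence of Ln
  have hfinn : ∫⁻ t in Set.Ioc (1 : ℝ) 2, dens (φn n) e t < ⊤ := by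
    rw [← hℓ']; exact hℓn_fin
  obtain ⟨Ln, hLn⟩ := radial_limit_exists he1 (huniv n).2 hfinn
  refine ⟨Ln, hLn, ?_, hpoint⟩
  -- limit bound
  have hsub : Filter.Tendsto (fun r : ℝ => φn n ((r : ℂ) * e) - φ ((r : ℂ) * e))
      (nhdsWithin 1 (Set.Ioi 1)) (nhds (Ln - L)) := hLn.sub hL
  have hT : Filter.Tendsto (fun r : ℝ => ‖φn n ((r : ℂ) * e) - φ ((r : ℂ) * e)‖)
      (nhdsWithin 1 (Set.Ioi 1)) (nhds (‖Ln - L‖)) :=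
    Filter.Tendsto.comp (Continuous.tendsto continuous_norm _) hsub
  have hev : ∀ᶠ (r : ℝ) in nhdsWithin (1:ℝ) (Set.Ioi (1:ℝ)),
      ‖φn n ((r : ℂ) * e) - φ ((r : ℂ) * e)‖ ≤ ε := by
    filter_upwards [Ioo_mem_nhdsGT_of_mem (Set.mem_Ico.2 ⟨le_rfl, one_lt_two⟩)] with r hr
    exact hpoint r ⟨hr.1, le_of_lt hr.2⟩
  exact le_of_tendsto hT hev
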